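/- arXiv:2505.13796 — 3 statements merged into one kernel-verified Lean document; each statement's English description precedes it below -/
import Mathlib

section
/- For real numbers $w, d, t$ with $w \geq d \geq 1$ and $0 \leq t \leq d/4$, one has $(w + 2t)(w + 2t - 1)(w - t + 1)^2 \leq (w + d/2 + 1/2)^3 (w - d/2 + 3/2)$. -/
/-!
The sum `(w + 2t) + 2(w - t + 1) = 3w + 2` does not depend on `t`, so AM-GM bounds
`(w + 2t)(w - t + 1)^2` by `((3w + 2)/3)^3`; with `w + 2t - 1 ≤ w + d/2 - 1` this eliminates `t`.
What remains is an inequality in `w` and `d` whose difference, written in `w - d ≥ 0` and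
`d - 1 ≥ 0`, is a polynomial with positive coefficients.
-/

theorem mul_sq_le_arith_mean_cube {K : Type*} [Field K] [LinearOrder K] [IsStrictOrderedRing K]
    {x y : K} (h : 0 ≤ x + 8 * y) : x * y ^ 2 ≤ ((x + 2 * y) / 3) ^ 3 := by
  have key : ((x + 2 * y) / 3) ^ 3 - x * y ^ 2 = (x - y) ^ 2 * (x + 8 * y) / 27 := by ring
  have : 0 ≤ (x - y) ^ 2 * (x + 8 * y) / 27 := by positivity
  linarith

theorem bound_without_t (w d : ℝ) (hwd : d ≤ w) (hd : 1 ≤ d) :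
    (w + d / 2 - 1) * ((3 * w + 2) / 3) ^ 3 ≤ (w + d / 2 + 1 / 2) ^ 3 * (w - d / 2 + 3 / 2) := by
  obtain ⟨a, ha, rfl⟩ : ∃ a, 0 ≤ a ∧ w = d + a := ⟨w - d, by linarith, by ring⟩
  obtain ⟨e, he, rfl⟩ : ∃ e, 0 ≤ e ∧ d = 1 + e := ⟨d - 1, by linarith, by ring⟩
  rw [← sub_nonneg]
  ring_nf
  positivity

theorem stmt_4 (w d t : ℝ) (hwd : d ≤ w) (hd : 1 ≤ d) (ht0 : 0 ≤ t) (htd : t ≤ d / 4) :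
    (w + 2 * t) * (w + 2 * t - 1) * (w - t + 1) ^ 2
      ≤ (w + d / 2 + 1 / 2) ^ 3 * (w - d / 2 + 3 / 2) := by
  have amgm : (w + 2 * t) * (w - t + 1) ^ 2 ≤ ((3 * w + 2) / 3) ^ 3 :=
    (mul_sq_le_arith_mean_cube (by linarith)).trans_eq (by ring)
  calc (w + 2 * t) * (w + 2 * t - 1) * (w - t + 1) ^ 2
      = (w + 2 * t - 1) * ((w + 2 * t) * (w - t + 1) ^ 2) := by ring
    _ ≤ (w + d / 2 - 1) * ((3 * w + 2) / 3) ^ 3 :=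
      mul_le_mul (by linarith) amgm (mul_nonneg (by linarith) (sq_nonneg _)) (by linarith)
    _ ≤ (w + d / 2 + 1 / 2) ^ 3 * (w - d / 2 + 3 / 2) := bound_without_t w d hwd hd
end

section
/- For natural numbers $w \geq d \geq j \geq 0$ with $d \geq 1$, one has $\binom{w}{j}\binom{w + d - 2j}{d - j} \leq \frac{(w + d/2 + 1/2)^{d-j}\,(w - d/2 + 3/2)^{j}}{j!\,(d-j)!}$, where the right-hand side is interpreted as a real number. -/
/-! With `k = d - j`, `A = w + d/2 + 1/2` and `B = w - d/2 + 3/2`, clearing `j! k!` turns the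
binomials into falling factorials. Each falling factorial is at most the power of the midpoint of
its factors, giving `x ^ j * y ^ k` with `x = B + (k - 2)/2` and
`y = A - 3j/2`. Weighted AM-GM bounds this by `B ^ j * A ^ k` as soon as `j x / B + k y / A ≤ j + k`,
i.e. `j (k - 2) A ≤ 3 j k B`, which holds because `A < 3 B` when `d ≤ w`. -/

open Finset

theorem prod_range_sub_le_pow (x : ℝ) (m : ℕ) (hx : (m : ℝ) - 1 ≤ x) :
    ∏ i ∈ range m, (x - i) ≤ (x - (m - 1) / 2) ^ m := by
  rcases Nat.eq_zero_or_pos m with rfl | hm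
  · simp
  have hm1 : (1 : ℝ) ≤ m := by exact_mod_cast hm
  have hfactor : ∀ i ∈ range m, 0 ≤ x - i := fun i hi => by
    have : (i : ℝ) + 1 ≤ m := by exact_mod_cast mem_range.1 hi
    linarith
  -- pair the factor `x - i` with `x - (m - 1 - i)`: their product is at most the squared midpoint
  have hsq : (∏ i ∈ range m, (x - i)) ^ 2 ≤ ((x - (m - 1) / 2) ^ m) ^ 2 := calc
    (∏ i ∈ range m, (x - i)) ^ 2
        = ∏ i ∈ range m, ((x - i) * (x - (m - 1 - i : ℕ))) := by
          rw [sq, prod_mul_distrib]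
          congr 1
          exact (prod_range_reflect (fun i : ℕ => x - i) m).symm
    _ ≤ ∏ _i ∈ range m, (x - (m - 1) / 2) ^ 2 := by
          refine prod_le_prod (fun i hi => mul_nonneg (hfactor i hi) ?_) (fun i hi => ?_)
          · exact hfactor _ (mem_range.2 (by have := mem_range.1 hi; omega))
          · have hi' : i ≤ m - 1 := by have := mem_range.1 hi; omega
            rw [Nat.cast_sub hi', Nat.cast_sub hm]
            push_cast
            nlinarith [sq_nonneg ((m - 1 : ℝ) / 2 - i)]
    _ = ((x - (m - 1) / 2) ^ m) ^ 2 := by rw [prod_const, card_range, ← pow_mul, ← pow_mul, mul_comm]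
  exact le_of_pow_le_pow_left₀ two_ne_zero (pow_nonneg (by linarith) m) hsq

theorem pow_mul_pow_le_pow_mul_pow {x y a b : ℝ} {j k : ℕ} (hx : 0 ≤ x) (hy : 0 ≤ y)
    (ha : 0 < a) (hb : 0 < b) (h : j * x * b + k * y * a ≤ (j + k) * a * b) :
    x ^ j * y ^ k ≤ a ^ j * b ^ k := by
  rcases Nat.eq_zero_or_pos (j + k) with hjk | hjk
  · obtain ⟨rfl, rfl⟩ : j = 0 ∧ k = 0 := by omega
    simp
  set n : ℝ := j + k with hn
  have hn0 : 0 < n := by rw [hn]; exact_mod_cast hjk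
  have hp : 0 ≤ x / a := div_nonneg hx ha.le
  have hq : 0 ≤ y / b := div_nonneg hy hb.le
  have hamgm : (x / a) ^ (j / n) * (y / b) ^ (k / n) ≤ 1 := calc
    _ ≤ j / n * (x / a) + k / n * (y / b) :=
        Real.geom_mean_le_arith_mean2_weighted (by positivity) (by positivity) hp hq
          (by rw [← add_div, div_self hn0.ne'])
    _ = (j * x * b + k * y * a) / (n * a * b) := by field_simp
    _ ≤ 1 := (div_le_one (by positivity)).2 h
  have hpow : ((x / a) ^ (j / n) * (y / b) ^ (k / n)) ^ (j + k) = (x / a) ^ j * (y / b) ^ k := by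
    rw [mul_pow, ← Real.rpow_natCast, ← Real.rpow_natCast, ← Real.rpow_natCast (y / b),
      ← Real.rpow_mul hp, ← Real.rpow_natCast (x / a), ← Real.rpow_mul hq]
    push_cast
    rw [← hn, div_mul_cancel₀ _ hn0.ne', div_mul_cancel₀ _ hn0.ne']
  have := pow_le_one₀ (by positivity) hamgm (n := j + k)
  rw [hpow, div_pow, div_pow, div_mul_div_comm, div_le_one (by positivity)] at this
  exact this

theorem Nat.cast_descFactorial_le_pow (n m : ℕ) (h : m ≤ n + 1) :
    (n.descFactorial m : ℝ) ≤ ((n : ℝ) - (m - 1) / 2) ^ m := by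
  rw [← descPochhammer_eval_eq_descFactorial, descPochhammer_eval_eq_prod_range]
  have h' : (m : ℝ) ≤ n + 1 := by exact_mod_cast h
  exact prod_range_sub_le_pow n m (by linarith)

theorem descFactorial_mul_descFactorial_le {w d j : ℕ} (hjd : j ≤ d) (hdw : d ≤ w) :
    (w.descFactorial j : ℝ) * ((w + d - 2 * j).descFactorial (d - j) : ℝ)
      ≤ ((w : ℝ) + d / 2 + 1 / 2) ^ (d - j) * ((w : ℝ) - d / 2 + 3 / 2) ^ j := by
  have hx := Nat.cast_descFactorial_le_pow w j (by omega)
  have hy := Nat.cast_descFactorial_le_pow (w + d - 2 * j) (d - j) (by omega)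
  rw [Nat.cast_sub (by omega : 2 * j ≤ w + d), Nat.cast_sub hjd] at hy
  push_cast at hy
  have hjd' : (j : ℝ) ≤ d := by exact_mod_cast hjd
  have hdw' : (d : ℝ) ≤ w := by exact_mod_cast hdw
  have hj0 : (0 : ℝ) ≤ j := j.cast_nonneg
  calc _ ≤ ((w : ℝ) - (j - 1) / 2) ^ j * ((w + d - 2 * j : ℝ) - (d - j - 1) / 2) ^ (d - j) :=
        mul_le_mul hx hy (Nat.cast_nonneg _) (pow_nonneg (by linarith) _)
    _ ≤ ((w : ℝ) - d / 2 + 3 / 2) ^ j * ((w : ℝ) + d / 2 + 1 / 2) ^ (d - j) := by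
        apply pow_mul_pow_le_pow_mul_pow (by linarith) (by linarith) (by linarith) (by linarith)
        rw [Nat.cast_sub hjd]
        nlinarith [mul_nonneg hj0 (sub_nonneg.2 hjd'), mul_nonneg hj0 (sub_nonneg.2 hdw'),
          mul_nonneg (mul_nonneg hj0 (sub_nonneg.2 hjd')) (sub_nonneg.2 hdw')]
    _ = _ := mul_comm _ _

theorem stmt_5_general (w d j : ℕ) (hjd : j ≤ d) (hdw : d ≤ w) :
    ((Nat.choose w j * Nat.choose (w + d - 2 * j) (d - j) : ℕ) : ℝ)
      ≤ ((w : ℝ) + (d : ℝ) / 2 + 1 / 2) ^ (d - j) * ((w : ℝ) - (d : ℝ) / 2 + 3 / 2) ^ j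
          / ((Nat.factorial j : ℝ) * (Nat.factorial (d - j) : ℝ)) := by
  rw [le_div_iff₀ (by positivity)]
  calc ((Nat.choose w j * Nat.choose (w + d - 2 * j) (d - j) : ℕ) : ℝ)
        * ((Nat.factorial j : ℝ) * (Nat.factorial (d - j) : ℝ))
      = (w.descFactorial j : ℝ) * ((w + d - 2 * j).descFactorial (d - j) : ℝ) := by
        rw [Nat.descFactorial_eq_factorial_mul_choose, Nat.descFactorial_eq_factorial_mul_choose]
        push_cast
        ring
    _ ≤ _ := descFactorial_mul_descFactorial_le hjd hdw

theorem stmt_5 (w d j : ℕ) (hjd : j ≤ d) (hdw : d ≤ w) (hd : 1 ≤ d) :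
    ((Nat.choose w j * Nat.choose (w + d - 2 * j) (d - j) : ℕ) : ℝ)
      ≤ ((w : ℝ) + (d : ℝ) / 2 + 1 / 2) ^ (d - j) * ((w : ℝ) - (d : ℝ) / 2 + 3 / 2) ^ j
          / ((Nat.factorial j : ℝ) * (Nat.factorial (d - j) : ℝ)) :=
  stmt_5_general w d j hjd hdw
end

section
/- Let $\sigma$ be a character of a two-letter alphabet and let $w \geq d \geq 1$. The condensed $d$-neighborhood of the unary word $\sigma^w$ has exactly $\binom{w}{d}$ elements. -/
/-- Costs for the Levenshtein distance (as in Mathlib's former `Mathlib.Data.List.EditDistance.Defs`). -/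
structure Levenshtein.Cost (α β δ : Type*) where
  delete : α → δ
  insert : β → δ
  substitute : α → β → δ

namespace Levenshtein

def defaultCost {α : Type*} [DecidableEq α] : Cost α α ℕ where
  delete _ := 1
  insert _ := 1
  substitute a b := if a = b then 0 else 1

def impl {α β δ : Type*} [AddZeroClass δ] [Min δ] (C : Cost α β δ)
    (xs : List α) (y : β) (d : {r : List δ // 0 < r.length}) : {r : List δ // 0 < r.length} :=
  let ⟨ds, w⟩ := d
  xs.zip (ds.zip ds.tail) |>.foldr
    (init := ⟨[C.insert y + ds.getLast (List.ne_nil_of_length_pos w)], by simp⟩)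
    (fun ⟨x, d₀, d₁⟩ ⟨r, w⟩ =>
      ⟨min (C.delete x + r[0]) (min (C.insert y + d₀) (C.substitute x y + d₁)) :: r, by simp⟩)

end Levenshtein

def suffixLevenshtein {α β δ : Type*} [AddZeroClass δ] [Min δ] (C : Levenshtein.Cost α β δ)
    (xs : List α) (ys : List β) : {r : List δ // 0 < r.length} :=
  ys.foldr
    (Levenshtein.impl C xs)
    (xs.foldr (init := ⟨[0], by simp⟩) (fun a ⟨r, w⟩ => ⟨(C.delete a + r[0]) :: r, by simp⟩))

def levenshtein {α β δ : Type*} [AddZeroClass δ] [Min δ] (C : Levenshtein.Cost α β δ)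
    (xs : List α) (ys : List β) : δ :=
  let ⟨r, w⟩ := suffixLevenshtein C xs ys
  r[0]

/-!
For a unary word the edit distance is explicit: an optimal alignment of `U` with `σ^w` matches
`min (count σ U) w` letters `σ` and pays one for every other position of the longer word, so
`d(U, σ^w) = max |U| w - min (count σ U) w`. Hence `U` lies in the condensed neighbourhood
exactly when it has `w - d` letters `σ`, length at most `w`, and ends in `σ` (or is empty):
deleting a final `σ` leaves the neighbourhood, while deleting any other final letter does not
increase the distance.
Over a two-letter alphabet, padding with `τ` up to length `w` is a bijection from these words
onto the words of length `w` with `w - d` letters `σ`, and there are `choose w (w - d)` of them.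
-/

open List

section LevenshteinRecursion

variable {α β δ : Type*} [AddZeroClass δ] [Min δ] (C : Levenshtein.Cost α β δ)

theorem Levenshtein.impl_cons (x : α) (xs : List α) (y : β) (d : δ) (ds : List δ)
    (w : 0 < (d :: ds).length) (w' : 0 < ds.length) :
    (impl C (x :: xs) y ⟨d :: ds, w⟩).1 =
      min (C.delete x + (impl C xs y ⟨ds, w'⟩).1[0]'(impl C xs y ⟨ds, w'⟩).2)
        (min (C.insert y + d) (C.substitute x y + ds[0])) :: (impl C xs y ⟨ds, w'⟩).1 :=
  match ds, w' with | _ :: _, _ => rfl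

theorem Levenshtein.impl_length (xs : List α) (y : β) (d : {r : List δ // 0 < r.length})
    (w : d.1.length = xs.length + 1) : (impl C xs y d).1.length = xs.length + 1 := by
  induction xs generalizing d with
  | nil => rfl
  | cons x xs ih =>
    match d, w with
    | ⟨d₁ :: d₂ :: ds, _⟩, w =>
      rw [impl_cons C x xs y d₁ (d₂ :: ds) (by simp) (by simp), length_cons,
        ih ⟨d₂ :: ds, by simp⟩ (by simpa using w), length_cons]

theorem suffixLevenshtein_length (xs : List α) (ys : List β) :
    (suffixLevenshtein C xs ys).1.length = xs.length + 1 := by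
  induction ys with
  | nil =>
    induction xs with
    | nil => rfl
    | cons _ xs ih => simpa [suffixLevenshtein] using ih
  | cons y ys ih => exact Levenshtein.impl_length C xs y _ ih

theorem levenshtein_eq_getElem_zero (xs : List α) (ys : List β) :
    levenshtein C xs ys = (suffixLevenshtein C xs ys).1[0]'(suffixLevenshtein C xs ys).2 := rfl

theorem suffixLevenshtein_cons₂ (xs : List α) (y : β) (ys : List β) :
    suffixLevenshtein C xs (y :: ys) = Levenshtein.impl C xs y (suffixLevenshtein C xs ys) := rfl

theorem suffixLevenshtein_cons₁ (x : α) (xs : List α) (ys : List β) :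
    (suffixLevenshtein C (x :: xs) ys).1 =
      levenshtein C (x :: xs) ys :: (suffixLevenshtein C xs ys).1 := by
  induction ys with
  | nil => rfl
  | cons y ys ih =>
    rw [levenshtein_eq_getElem_zero, suffixLevenshtein_cons₂, suffixLevenshtein_cons₂]
    generalize suffixLevenshtein C (x :: xs) ys = S at ih
    obtain ⟨l, hl⟩ := S
    subst ih
    simp only [Levenshtein.impl_cons C x xs y _ _ hl (suffixLevenshtein C xs ys).2,
      getElem_cons_zero]

theorem levenshtein_cons_cons (x : α) (xs : List α) (y : β) (ys : List β) :
    levenshtein C (x :: xs) (y :: ys) =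
      min (C.delete x + levenshtein C xs (y :: ys))
        (min (C.insert y + levenshtein C (x :: xs) ys)
          (C.substitute x y + levenshtein C xs ys)) := by
  rw [levenshtein_eq_getElem_zero C (x :: xs), suffixLevenshtein_cons₂]
  have h := suffixLevenshtein_cons₁ C x xs ys
  generalize suffixLevenshtein C (x :: xs) ys = S at h
  obtain ⟨l, hl⟩ := S
  subst h
  simp only [Levenshtein.impl_cons C x xs y _ _ hl (suffixLevenshtein C xs ys).2,
    getElem_cons_zero]
  rfl

theorem levenshtein_cons_nil (x : α) (xs : List α) :
    levenshtein C (x :: xs) ([] : List β) = C.delete x + levenshtein C xs [] := rfl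

theorem levenshtein_nil_cons (y : β) (ys : List β) :
    levenshtein C ([] : List α) (y :: ys) = C.insert y + levenshtein C [] ys := by
  rw [levenshtein_eq_getElem_zero, levenshtein_eq_getElem_zero, suffixLevenshtein_cons₂]
  have hl := suffixLevenshtein_length C ([] : List α) ys
  generalize suffixLevenshtein C ([] : List α) ys = S at hl
  obtain ⟨_ | ⟨a, _ | _⟩, hlpos⟩ := S
  · simp at hlpos
  · rfl
  · simp at hl

end LevenshteinRecursion

section Words

variable {α : Type*} [DecidableEq α]

theorem levenshtein_replicate_right (σ : α) (U : List α) (w : ℕ) :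
    levenshtein Levenshtein.defaultCost U (replicate w σ) =
      max U.length w - min (U.count σ) w := by
  induction U generalizing w with
  | nil =>
    induction w with
    | zero => rfl
    | succ w ih =>
      rw [replicate_succ, levenshtein_nil_cons, ih]
      simp only [Levenshtein.defaultCost, length_nil, count_nil]
      omega
  | cons x xs ih =>
    induction w with
    | zero =>
      rw [replicate_zero, levenshtein_cons_nil, ← replicate_zero, ih]
      simp only [Levenshtein.defaultCost, length_cons]
      omega
    | succ w ihw =>
      rw [replicate_succ, levenshtein_cons_cons, ← replicate_succ, ih, ihw, ih]
      have := xs.count_le_length (a := σ)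
      simp only [Levenshtein.defaultCost, length_cons, count_cons, beq_iff_eq]
      split_ifs <;> omega

def condensedNeighborhood (W : List α) (d : ℕ) : Set (List α) :=
  {U | levenshtein Levenshtein.defaultCost U W ≤ d ∧
    ∀ P : List α, P <+: U → P ≠ U → ¬ levenshtein Levenshtein.defaultCost P W ≤ d}

theorem condensedNeighborhood_replicate (σ : α) (w d : ℕ) :
    condensedNeighborhood (replicate w σ) d =
      {U | U.count σ = w - d ∧ U.length ≤ w ∧ (U = [] ∨ ∃ V, U = V ++ [σ])} := by
  ext U
  simp only [condensedNeighborhood, Set.mem_ofPred_eq, levenshtein_replicate_right]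
  constructor
  · rintro ⟨hU, hprefix⟩
    obtain rfl | ⟨V, b, rfl⟩ := U.eq_nil_or_concat'
    · rw [length_nil, count_nil] at hU ⊢
      exact ⟨by omega, Nat.zero_le w, Or.inl rfl⟩
    have hnil := hprefix [] nil_prefix (by simp)
    have hV := hprefix V (prefix_append V [b]) (by simp)
    have := V.count_le_length (a := σ)
    rw [length_nil, count_nil] at hnil
    rw [length_append, length_singleton, count_append, count_singleton'] at hU ⊢
    by_cases hb : b = σ
    · subst hb
      rw [if_pos rfl] at hU ⊢
      exact ⟨by omega, by omega, Or.inr ⟨V, rfl⟩⟩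
    · rw [if_neg hb] at hU
      exact absurd hU (by omega)
  · rintro ⟨hcount, hlen, hU⟩
    have := U.count_le_length (a := σ)
    refine ⟨by omega, fun P hP hne => ?_⟩
    obtain rfl | ⟨V, rfl⟩ := hU
    · exact absurd (prefix_nil.1 hP) hne
    have hPV : P <+: V := (prefix_concat_iff.1 hP).resolve_left hne
    have := hPV.sublist.count_le σ
    have := hPV.length_le
    rw [count_append, count_singleton', if_pos rfl] at hcount
    rw [length_append, length_singleton] at hlen
    omega

theorem count_ofFn (a : α) {n : ℕ} (f : Fin n → α) :
    (ofFn f).count a = (Finset.univ.filter fun i => f i = a).card := by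
  induction n with
  | zero => rfl
  | succ n ih =>
    rw [ofFn_succ, count_cons, ih, Finset.card_filter, Finset.card_filter, Fin.sum_univ_succ]
    simp only [beq_iff_eq]
    exact Nat.add_comm _ _

section TwoLetters

variable {σ τ : α}

theorem count_rightpad_of_ne (hτσ : τ ≠ σ) (n : ℕ) (U : List α) :
    (U.rightpad n τ).count σ = U.count σ := by
  simp [rightpad, count_replicate, hτσ]

theorem rdropWhile_rightpad (hτσ : τ ≠ σ) {U : List α} (hU : U = [] ∨ ∃ V, U = V ++ [σ])
    (n : ℕ) : (U.rightpad n τ).rdropWhile (· == τ) = U := by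
  rw [rightpad]
  induction n - U.length with
  | zero =>
    obtain rfl | ⟨V, rfl⟩ := hU
    · simp
    · simpa using rdropWhile_concat_neg (· == τ) V σ (by simpa using hτσ.symm)
  | succ k ih =>
    rw [replicate_succ', ← append_assoc, rdropWhile_concat_pos _ _ τ (by simp), ih]

theorem rightpad_rdropWhile (τ : α) (W : List α) :
    (W.rdropWhile (· == τ)).rightpad W.length τ = W := by
  set D := W.rdropWhile (· == τ)
  set T := W.rtakeWhile (· == τ)
  have hW : D ++ T = W := rdropWhile_append_rtakeWhile
  have hT : T = replicate T.length τ :=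
    eq_replicate_iff.2 ⟨rfl, fun x hx => by simpa using mem_rtakeWhile_imp hx⟩
  have hlen : W.length = D.length + T.length := by rw [← hW, length_append]
  conv_rhs => rw [← hW, hT]
  rw [rightpad, hlen, Nat.add_sub_cancel_left]

theorem rdropWhile_eq_nil_or_concat (hall : ∀ x, x = σ ∨ x = τ) (W : List α) :
    W.rdropWhile (· == τ) = [] ∨ ∃ V, W.rdropWhile (· == τ) = V ++ [σ] := by
  rcases eq_or_ne (W.rdropWhile (· == τ)) [] with h | hne
  · exact Or.inl h
  · have hlast : (W.rdropWhile (· == τ)).getLast hne = σ :=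
      (hall _).resolve_right (by simpa using rdropWhile_last_not (· == τ) W hne)
    exact Or.inr ⟨_, hlast ▸ (dropLast_append_getLast hne).symm⟩

theorem ncard_endsWith_eq_ncard_length_eq (hall : ∀ x, x = σ ∨ x = τ) (hτσ : τ ≠ σ)
    (k n : ℕ) :
    {U : List α | U.count σ = k ∧ U.length ≤ n ∧ (U = [] ∨ ∃ V, U = V ++ [σ])}.ncard =
      {W : List α | W.length = n ∧ W.count σ = k}.ncard := by
  have hinj : Set.InjOn (rightpad n τ)
      {U : List α | U.count σ = k ∧ U.length ≤ n ∧ (U = [] ∨ ∃ V, U = V ++ [σ])} :=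
    Set.LeftInvOn.injOn (f₁' := rdropWhile (· == τ)) fun U hU =>
      rdropWhile_rightpad hτσ hU.2.2 n
  refine hinj.ncard_image.symm.trans (congrArg Set.ncard ?_)
  ext W
  constructor
  · rintro ⟨U, ⟨hcount, hlen, -⟩, rfl⟩
    exact ⟨by simp [hlen], by rw [count_rightpad_of_ne hτσ, hcount]⟩
  · rintro ⟨rfl, hcount⟩
    refine ⟨W.rdropWhile (· == τ), ⟨?_, (rdropWhile_prefix _ _).length_le,
      rdropWhile_eq_nil_or_concat hall W⟩, rightpad_rdropWhile τ W⟩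
    rw [← count_rightpad_of_ne hτσ W.length, rightpad_rdropWhile, hcount]

theorem ncard_length_count_eq (hall : ∀ x, x = σ ∨ x = τ) (hτσ : τ ≠ σ) (n k : ℕ) :
    {W : List α | W.length = n ∧ W.count σ = k}.ncard = n.choose k := by
  let word : Finset (Fin n) → List α := fun s => ofFn fun i => if i ∈ s then σ else τ
  have hcount (s : Finset (Fin n)) : (word s).count σ = s.card := by
    rw [count_ofFn]
    congr 1
    ext i
    by_cases hi : i ∈ s <;> simp [hi, hτσ]
  have hinj : Function.Injective word := fun s t hst => by
    ext i
    have := congrFun (ofFn_injective hst) i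
    by_cases hs : i ∈ s <;> by_cases ht : i ∈ t <;> simp_all [hτσ.symm]
  have himage : word '' (Finset.univ.powersetCard k : Finset (Finset (Fin n))) =
       {W : List α | W.length = n ∧ W.count σ = k} := by
    ext W
    constructor
    · rintro ⟨s, hs, rfl⟩
      exact ⟨length_ofFn, (hcount s).trans (Finset.mem_powersetCard_univ.1 hs)⟩
    · rintro ⟨rfl, hk⟩
      have hW : word (Finset.univ.filter fun i => W[i] = σ) = W := by
        conv_rhs => rw [← ofFn_getElem (xs := W)]
        refine congrArg ofFn (funext fun i => ?_)
        simp only [Finset.mem_filter_univ]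
        split_ifs with h
        exacts [h.symm, ((hall _).resolve_left h).symm]
      refine ⟨_, Finset.mem_powersetCard_univ.2 ?_, hW⟩
      rw [← hcount, hW, hk]
  rw [← himage, Set.ncard_image_of_injective _ hinj, Set.ncard_coe_finset,
    Finset.card_powersetCard, Finset.card_univ, Fintype.card_fin]

end TwoLetters

end Words

theorem stmt_12_general {α : Type*} [Fintype α] [DecidableEq α] (hcard : Fintype.card α = 2)
    (σ : α) (w d : ℕ) (hdw : d ≤ w) :
    {U : List α | levenshtein Levenshtein.defaultCost U (List.replicate w σ) ≤ d ∧
        ∀ P : List α, P <+: U → P ≠ U →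
          ¬ levenshtein Levenshtein.defaultCost P (List.replicate w σ) ≤ d}.ncard
      = Nat.choose w d := by
  obtain ⟨τ, hτσ, hτ⟩ := (Nat.card_eq_two_iff' σ).1 (Nat.card_eq_fintype_card.trans hcard)
  have hall : ∀ x, x = σ ∨ x = τ := fun x => or_iff_not_imp_left.2 (hτ x)
  change (condensedNeighborhood (replicate w σ) d).ncard = _
  rw [condensedNeighborhood_replicate, ncard_endsWith_eq_ncard_length_eq hall hτσ,
    ncard_length_count_eq hall hτσ, Nat.choose_symm hdw]

theorem stmt_12 {α : Type*} [Fintype α] [DecidableEq α] (hcard : Fintype.card α = 2)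
    (σ : α) (w d : ℕ) (hd : 1 ≤ d) (hdw : d ≤ w) :
    {U : List α | levenshtein Levenshtein.defaultCost U (List.replicate w σ) ≤ d ∧
        ∀ P : List α, P <+: U → P ≠ U →
          ¬ levenshtein Levenshtein.defaultCost P (List.replicate w σ) ≤ d}.ncard
      = Nat.choose w d :=
  stmt_12_general hcard σ w d hdw
end
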